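/- Every partial orientation of a connected multigraph is equivalent via cycle reversals and edge pivots to a unique cycle-path minimal partial orientation (with respect to any fixed pair (<, A)); consequently, cycle-path minimal partial orientations give unique representatives for each achievable indegree sequence. -/

import Mathlib

open Classical

noncomputable section

/-- A finite multigraph, given by a finite vertex type, a finite edge type, and
two endpoint maps (which also provide a built-in reference direction for each edge). -/
structure Multigraph where
  V : Type
  E : Type
  [fintypeV : Fintype V]
  [fintypeE : Fintype E]
  fst : E → V
  snd : E → V

attribute [instance] Multigraph.fintypeV Multigraph.fintypeE

namespace Multigraph

variable (G : Multigraph)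

/-- Adjacency between vertices using only edges in `S`. -/
def adjOn (S : Set G.E) (u v : G.V) : Prop :=
  ∃ e ∈ S, (G.fst e = u ∧ G.snd e = v) ∨ (G.fst e = v ∧ G.snd e = u)

/-- Reachability (in the undirected sense) using only edges in `S`. -/
def reachOn (S : Set G.E) : G.V → G.V → Prop :=
  Relation.ReflTransGen (G.adjOn S)

def Connected : Prop := ∀ u v : G.V, G.reachOn Set.univ u v

def IsLoop (e : G.E) : Prop := G.fst e = G.snd e

def IsBridge (e : G.E) : Prop := ¬ G.reachOn {f | f ≠ e} (G.fst e) (G.snd e)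

/-- Number of connected components of the spanning subgraph with edge set `S`. -/
def comps (S : Set G.E) : ℕ := Nat.card (Quot (G.reachOn S))

/-- Rank of an edge set: `|V|` minus the number of components it spans. -/
def rk (S : Set G.E) : ℕ := Fintype.card G.V - G.comps S

/-- The Tutte polynomial, via the corank-nullity (subgraph) expansion. -/
def tutte (x y : ℚ) : ℚ :=
  ∑ S : Finset G.E,
    (x - 1) ^ (G.rk Set.univ - G.rk (↑S : Set G.E)) * (y - 1) ^ (S.card - G.rk (↑S : Set G.E))

/-- The genus (cycle rank) `|E| - |V| + 1` of a connected multigraph. -/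
def genus : ℕ := Fintype.card G.E + 1 - Fintype.card G.V

/-- A partial orientation: each edge is unoriented (`none`), oriented in the reference
direction `fst → snd` (`some true`), or oriented oppositely (`some false`). -/
abbrev PartialOrientation := G.E → Option Bool

/-- The tail of edge `e` traversed in direction `b` (`true` = `fst → snd`). -/
def dtail (e : G.E) (b : Bool) : G.V := if b then G.fst e else G.snd e

/-- The head of edge `e` traversed in direction `b` (`true` = `fst → snd`). -/
def dhead (e : G.E) (b : Bool) : G.V := if b then G.snd e else G.fst e

/-- Directed adjacency under a partial orientation. -/
def dAdj (O : G.PartialOrientation) (u v : G.V) : Prop :=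
  ∃ e b, O e = some b ∧ G.dtail e b = u ∧ G.dhead e b = v

/-- Directed reachability under a partial orientation. -/
def dReach (O : G.PartialOrientation) : G.V → G.V → Prop :=
  Relation.ReflTransGen (G.dAdj O)

/-- A partial orientation is acyclic iff it contains no directed cycle, equivalently there
is no oriented edge together with a directed path from its head back to its tail. -/
def Acyclic (O : G.PartialOrientation) : Prop :=
  ¬ ∃ e b, O e = some b ∧ G.dReach O (G.dhead e b) (G.dtail e b)

/-- `e` crosses the cut determined by the vertex set `X`. -/
def crosses (X : Set G.V) (e : G.E) : Prop := ¬ ((G.fst e ∈ X) ↔ (G.snd e ∈ X))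

/-- `(X, Xᶜ)` is a directed cut of `O`: the cut is nonempty and every crossing edge is
oriented from `X` to `Xᶜ`. -/
def IsDirCut (O : G.PartialOrientation) (X : Set G.V) : Prop :=
  (∃ e, G.crosses X e) ∧
  ∀ e, G.crosses X e →
    (G.fst e ∈ X → O e = some true) ∧ (G.snd e ∈ X → O e = some false)

/-- A partial orientation is strongly connected iff it contains no directed cut. -/
def StronglyConnected (O : G.PartialOrientation) : Prop :=
  ¬ ∃ X, G.IsDirCut O X

/-- A directed cycle of `O`: a nonempty cyclically chained list of oriented steps using
pairwise distinct edges, each oriented in `O` as traversed. -/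
def IsDCycle (O : G.PartialOrientation) (c : List (G.E × Bool)) : Prop :=
  c ≠ [] ∧ (∀ s ∈ c, O s.1 = some s.2) ∧
  List.Chain' (fun s t => G.dhead s.1 s.2 = G.dtail t.1 t.2) (c ++ c.take 1) ∧
  (c.map Prod.fst).Nodup

/-- A half-open path: a directed path (all steps but the last oriented in `O`) followed by
an unoriented edge, imagined with the direction that would extend the path. -/
def IsHalfOpenPath (O : G.PartialOrientation) (p : List (G.E × Bool)) : Prop :=
  2 ≤ p.length ∧
  List.Chain' (fun s t => G.dhead s.1 s.2 = G.dtail t.1 t.2) p ∧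
  (p.map Prod.fst).Nodup ∧
  (∀ s ∈ p.dropLast, O s.1 = some s.2) ∧
  ∀ h : p ≠ [], O (p.getLast h).1 = none

/-- `O'` is obtained from `O` by reversing one directed cut. -/
def cutRev (O O' : G.PartialOrientation) : Prop :=
  ∃ X, G.IsDirCut O X ∧ (∀ e, ¬ G.crosses X e → O' e = O e) ∧
    (∀ e, G.crosses X e → O' e = (O e).map not)

/-- `O'` is obtained from `O` by reversing one directed cycle. -/
def cycleRev (O O' : G.PartialOrientation) : Prop :=
  ∃ c, G.IsDCycle O c ∧ (∀ e, e ∉ c.map Prod.fst → O' e = O e) ∧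
    (∀ s ∈ c, O' s.1 = some (!s.2))

/-- `O'` is obtained from `O` by a Jacob's ladder cascade along a half-open path:
the first edge becomes unoriented and all other edges get the reversed direction. -/
def cascade (O O' : G.PartialOrientation) : Prop :=
  ∃ p, G.IsHalfOpenPath O p ∧ (∀ e, e ∉ p.map Prod.fst → O' e = O e) ∧
    (∀ h : p ≠ [], O' (p.head h).1 = none) ∧
    (∀ s ∈ p.tail, O' s.1 = some (!s.2))

/-- An edge pivot at a vertex `v`: unorient an edge `e'` oriented into `v` and orient a
previously unoriented edge `e` toward `v`. -/
def pivot (O O' : G.PartialOrientation) : Prop :=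
  ∃ e e' b b', e ≠ e' ∧ O e = none ∧ O e' = some b' ∧
    G.dhead e b = G.dhead e' b' ∧
    O' e = some b ∧ O' e' = none ∧ ∀ f, f ≠ e → f ≠ e' → O' f = O f

/-- A directed cut of `O` is minimal w.r.t. `(<, A)` if its `<`-minimum crossing edge is
oriented as in the reference orientation `A`. -/
def MinimalCut [LinearOrder G.E] (A : G.E → Bool) (O : G.PartialOrientation)
    (X : Set G.V) : Prop :=
  ∃ e, G.crosses X e ∧ (∀ e', G.crosses X e' → e ≤ e') ∧ O e = some (A e)

/-- A partial orientation is cut minimal if every directed cut in it is minimal. -/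
def CutMinimal [LinearOrder G.E] (A : G.E → Bool) (O : G.PartialOrientation) : Prop :=
  ∀ X, G.IsDirCut O X → G.MinimalCut A O X

/-- A list of steps is minimal w.r.t. `(<, A)` if its `<`-minimum edge is traversed in the
direction given by the reference orientation `A`. -/
def MinimalSteps [LinearOrder G.E] (A : G.E → Bool) (c : List (G.E × Bool)) : Prop :=
  ∃ s ∈ c, (∀ t ∈ c, s.1 ≤ t.1) ∧ s.2 = A s.1

/-- A partial orientation is cycle minimal if every directed cycle in it is minimal. -/
def CycleMinimal [LinearOrder G.E] (A : G.E → Bool) (O : G.PartialOrientation) : Prop :=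
  ∀ c, G.IsDCycle O c → G.MinimalSteps A c

/-- A partial orientation is cycle-path minimal if every directed cycle and every
half-open path in it is minimal. -/
def CyclePathMinimal [LinearOrder G.E] (A : G.E → Bool) (O : G.PartialOrientation) : Prop :=
  G.CycleMinimal A O ∧ ∀ p, G.IsHalfOpenPath O p → G.MinimalSteps A p

/-- The indegree of a vertex: the number of edges oriented toward it. -/
def indeg (O : G.PartialOrientation) (v : G.V) : ℕ :=
  Nat.card {e : G.E // ∃ b, O e = some b ∧ G.dhead e b = v}

/-- Orient the (previously unoriented) edge `e` in direction `b`. -/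
def orient (O : G.PartialOrientation) (e : G.E) (b : Bool) : G.PartialOrientation :=
  fun f => if f = e then some b else O f

/-- Deletion of the edge `e`. -/
def deleteEdge (e : G.E) : Multigraph where
  V := G.V
  E := {f : G.E // f ≠ e}
  fintypeE := Subtype.fintype _
  fst := fun f => G.fst f.1
  snd := fun f => G.snd f.1

/-- Contraction of the edge `e`: identify its two endpoints and remove `e`. -/
def contractEdge (e : G.E) : Multigraph where
  V := Quot (fun a b => a = G.fst e ∧ b = G.snd e)
  E := {f : G.E // f ≠ e}
  fintypeV := Fintype.ofSurjective (Quot.mk _) (Quot.mk_surjective)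
  fintypeE := Subtype.fintype _
  fst := fun f => Quot.mk _ (G.fst f.1)
  snd := fun f => Quot.mk _ (G.snd f.1)

/-- The number of acyclic partial orientations of `G`. -/
def numAcyclic : ℕ := Nat.card {O : G.PartialOrientation // G.Acyclic O}

/-- The number of strongly connected partial orientations of `G`. -/
def numStrong : ℕ := Nat.card {O : G.PartialOrientation // G.StronglyConnected O}

end Multigraph

/-!
Existence: give an edge defect 0, 1 or 2 according as it is oriented as in `A`, unoriented, or
oriented against `A`, and compare partial orientations by their defects, lexicographically along
`<`. Reversing a nonminimal directed cycle, or cascading a nonminimal half-open path (a sequence of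
pivots), improves the defect of its least edge and changes no smaller edge, so this well-founded
potential drops until the orientation is cycle-path minimal.

Uniqueness: cycle reversals and pivots preserve indegrees, so it suffices that two cycle-path
minimal `P`, `Q` with equal indegrees coincide. At the least edge `e₀` where they differ, either
one of them, say `P`, orients `e₀` against `A`, or `P e₀ = none` and `Q` orients `e₀` as `A`. In the
first case let `X` be the set reached from the head of `e₀` along `P`-edges above `e₀`: minimality
of `P` keeps the tail of `e₀` out of `X` and makes every edge above `e₀` touching `X` point into
`X`, so `Q` sends fewer edges into `X` than `P`, contradicting equal indegrees. In the second case
counting at the `A`-head of `e₀` yields an edge `f > e₀` entering it in `P`, and `f, e₀` is a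
nonminimal half-open path.
-/

namespace Multigraph

variable {G : Multigraph}

@[simp] lemma dtail_not (e : G.E) (b : Bool) : G.dtail e (!b) = G.dhead e b := by cases b <;> rfl

@[simp] lemma dhead_not (e : G.E) (b : Bool) : G.dhead e (!b) = G.dtail e b := by cases b <;> rfl

section Indegree

def headOf (O : G.PartialOrientation) (e : G.E) : Option G.V := (O e).map (G.dhead e)

lemma headOf_eq_some {O : G.PartialOrientation} {e : G.E} {v : G.V} :
    headOf O e = some v ↔ ∃ b, O e = some b ∧ G.dhead e b = v :=
  Option.map_eq_some_iff

lemma indeg_eq_of_perm {O O' : G.PartialOrientation} (σ : Equiv.Perm G.E)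
    (h : ∀ e, headOf O e = headOf O' (σ e)) (v : G.V) : G.indeg O v = G.indeg O' v :=
  Nat.card_congr <| σ.subtypeEquiv fun e => by rw [← headOf_eq_some, ← headOf_eq_some, h]

lemma indeg_pivot {O O' : G.PartialOrientation} (h : G.pivot O O') (v : G.V) :
    G.indeg O' v = G.indeg O v := by
  obtain ⟨e, e', b, b', hne, hOe, hOe', hhead, hO'e, hO'e', hrest⟩ := h
  refine indeg_eq_of_perm (Equiv.swap e e') (fun f => ?_) v
  rcases eq_or_ne f e with rfl | hfe
  · simp [headOf, hO'e, hOe', hhead]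
  rcases eq_or_ne f e' with rfl | hfe'
  · simp [headOf, hO'e', hOe]
  · simp [headOf, Equiv.swap_apply_of_ne_of_ne hfe hfe', hrest f hfe hfe']

lemma IsDCycle.dhead_eq_dtail {O : G.PartialOrientation} {l : List (G.E × Bool)}
    (hl : G.IsDCycle O l) {i j : ℕ} (hi : i < l.length) (hj : j < l.length)
    (hij : j = (i + 1) % l.length) : G.dhead l[i].1 l[i].2 = G.dtail l[j].1 l[j].2 := by
  have hchain := List.isChain_iff_getElem.1 hl.2.2.1 i
    (by simp only [List.length_append, List.length_take]; omega)
  rcases Nat.lt_or_ge (i + 1) l.length with h | h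
  · obtain rfl : j = i + 1 := by rw [hij, Nat.mod_eq_of_lt h]
    simpa [List.getElem_append_left hi, List.getElem_append_left h] using hchain
  · obtain hn : l.length = i + 1 := by omega
    obtain rfl : j = 0 := by simp [hij, hn]
    simpa [List.getElem_append_left hi, List.getElem_append_right, hn] using hchain

/-- `formPerm` shifts each edge of the cycle to the next one, whose new head is the old head of
the former. -/
lemma indeg_cycleRev {O O' : G.PartialOrientation} (h : G.cycleRev O O') (v : G.V) :
    G.indeg O' v = G.indeg O v := by
  obtain ⟨c, hc, hout, hrev⟩ := h
  refine (indeg_eq_of_perm (c.map Prod.fst).formPerm (fun e => ?_) v).symm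
  by_cases he : e ∈ c.map Prod.fst
  · obtain ⟨i, hi, rfl⟩ := List.mem_iff_getElem.1 he
    rw [List.formPerm_apply_getElem _ hc.2.2.2]
    rw [List.length_map] at hi
    simp only [List.getElem_map, List.length_map, headOf, hc.2.1 _ (List.getElem_mem hi),
      hrev _ (List.getElem_mem _), Option.map_some, dhead_not]
    rw [hc.dhead_eq_dtail hi (Nat.mod_lt _ (by omega)) rfl]
  · rw [List.formPerm_apply_of_notMem he, headOf, headOf, hout e he]

lemma indeg_eq_of_reflTransGen {O O' : G.PartialOrientation}
    (h : Relation.ReflTransGen (fun a b => G.cycleRev a b ∨ G.pivot a b) O O') (v : G.V) :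
    G.indeg O' v = G.indeg O v := by
  induction h with
  | refl => rfl
  | tail _ hstep ih =>
    rcases hstep with hstep | hstep
    · rw [indeg_cycleRev hstep, ih]
    · rw [indeg_pivot hstep, ih]

end Indegree

section Walk

inductive IsWalk : G.V → List (G.E × Bool) → G.V → Prop
  | nil (u : G.V) : IsWalk u [] u
  | cons {u v : G.V} {s : G.E × Bool} {l : List (G.E × Bool)} :
      G.dtail s.1 s.2 = u → IsWalk (G.dhead s.1 s.2) l v → IsWalk u (s :: l) v

lemma IsWalk.single (s : G.E × Bool) : IsWalk (G.dtail s.1 s.2) [s] (G.dhead s.1 s.2) :=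
  .cons rfl (.nil _)

lemma IsWalk.append {u v w : G.V} {l l' : List (G.E × Bool)} (h : IsWalk u l v)
    (h' : IsWalk v l' w) : IsWalk u (l ++ l') w := by
  induction h with
  | nil => exact h'
  | cons hu _ ih => exact .cons hu (ih h')

lemma IsWalk.isChain {u v : G.V} {l : List (G.E × Bool)} (h : IsWalk u l v) :
    l.IsChain (fun s t => G.dhead s.1 s.2 = G.dtail t.1 t.2) := by
  induction h with
  | nil => exact .nil
  | cons _ hl ih =>
    cases hl with
    | nil => exact .singleton _
    | cons ht => exact .cons_cons ht.symm ih

lemma IsWalk.of_append_cons {u v : G.V} {l₁ l₂ : List (G.E × Bool)} {s : G.E × Bool}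
    (h : IsWalk u (l₁ ++ s :: l₂) v) : IsWalk (G.dtail s.1 s.2) (s :: l₂) v := by
  induction l₁ generalizing u with
  | nil => cases h with | cons _ h => exact .cons rfl h
  | cons t l₁ ih => cases h with | cons _ h => exact ih h

lemma exists_walk_of_dReach {O : G.PartialOrientation} {u v : G.V} (h : G.dReach O u v) :
    ∃ l, IsWalk u l v ∧ (∀ s ∈ l, O s.1 = some s.2) ∧ (l.map Prod.fst).Nodup := by
  induction h using Relation.ReflTransGen.head_induction_on with
  | refl => exact ⟨[], .nil _, by simp, by simp⟩
  | head hadj _ ih =>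
    obtain ⟨e, b, hOe, rfl, rfl⟩ := hadj
    obtain ⟨l, hw, hO, hnd⟩ := ih
    by_cases he : e ∈ l.map Prod.fst
    · obtain ⟨⟨e, b'⟩, hs, rfl⟩ := List.mem_map.1 he
      obtain rfl : b' = b := Option.some.inj ((hO _ hs).symm.trans hOe)
      obtain ⟨l₁, l₂, rfl⟩ := List.append_of_mem hs
      refine ⟨(e, b') :: l₂, hw.of_append_cons, fun s hs => hO s (by simp_all), ?_⟩
      exact hnd.sublist ((List.sublist_append_right _ _).map _)
    · refine ⟨(e, b) :: l, .cons rfl hw, ?_, by simp [he, hnd]⟩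
      rintro s (_ | ⟨_, hs⟩)
      exacts [hOe, hO s hs]

end Walk

section Steps

lemma isDCycle_cons {O : G.PartialOrientation} {s : G.E × Bool} {l : List (G.E × Bool)}
    (hs : O s.1 = some s.2) (hw : IsWalk (G.dhead s.1 s.2) l (G.dtail s.1 s.2))
    (hl : ∀ t ∈ l, O t.1 = some t.2) (hnd : ((s :: l).map Prod.fst).Nodup) :
    G.IsDCycle O (s :: l) := by
  refine ⟨List.cons_ne_nil _ _, ?_, (IsWalk.cons rfl (hw.append (.single s))).isChain, hnd⟩
  rintro t (_ | ⟨_, ht⟩)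
  exacts [hs, hl t ht]

lemma isHalfOpenPath_append_singleton {O : G.PartialOrientation} {u v : G.V}
    {l : List (G.E × Bool)} {z : G.E × Bool} (hw : IsWalk u (l ++ [z]) v) (hl : l ≠ [])
    (hnd : ((l ++ [z]).map Prod.fst).Nodup) (hO : ∀ t ∈ l, O t.1 = some t.2)
    (hz : O z.1 = none) : G.IsHalfOpenPath O (l ++ [z]) := by
  refine ⟨?_, hw.isChain, hnd, by simpa using hO, fun _ => by simpa using hz⟩
  have := List.length_pos_of_ne_nil hl
  simp only [List.length_append, List.length_singleton]
  omega

/-- The pivots run from the unoriented end of the path backwards; for the recursion `s :: l` may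
have length one. -/
lemma exists_pivots_cascade {O : G.PartialOrientation} (s : G.E × Bool) (l : List (G.E × Bool))
    (hchain : (s :: l).IsChain (fun s t => G.dhead s.1 s.2 = G.dtail t.1 t.2))
    (hnd : ((s :: l).map Prod.fst).Nodup) (hO : ∀ t ∈ (s :: l).dropLast, O t.1 = some t.2)
    (hlast : O ((s :: l).getLast (List.cons_ne_nil _ _)).1 = none) :
    ∃ O', Relation.ReflTransGen G.pivot O O' ∧ (∀ f ∉ (s :: l).map Prod.fst, O' f = O f) ∧
      O' s.1 = none ∧ ∀ t ∈ l, O' t.1 = some !t.2 := by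
  induction l generalizing O s with
  | nil => exact ⟨O, .refl, fun _ _ => rfl, hlast, by simp⟩
  | cons t l ih =>
    rw [List.isChain_cons_cons] at hchain
    rw [List.map_cons, List.nodup_cons] at hnd
    rw [List.dropLast_cons_cons] at hO
    obtain ⟨O₁, hpivots, hout, ht, hl⟩ := ih t hchain.2 hnd.2
      (fun u hu => hO u (List.mem_cons_of_mem _ hu)) (by simpa [List.getLast_cons] using hlast)
    have hst : s.1 ≠ t.1 := fun h => hnd.1 (h ▸ List.mem_cons_self)
    have hs : O₁ s.1 = some s.2 := by rw [hout s.1 hnd.1]; exact hO s List.mem_cons_self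
    set O₂ := Function.update (Function.update O₁ s.1 none) t.1 (some !t.2)
    have hpivot : G.pivot O₁ O₂ :=
      ⟨t.1, s.1, !t.2, s.2, hst.symm, ht, hs, by simp [hchain.1], by simp [O₂], by simp [O₂, hst],
        fun f h₁ h₂ => by simp [O₂, h₁, h₂]⟩
    refine ⟨O₂, hpivots.tail hpivot, fun f hf => ?_, by simp [O₂, hst], ?_⟩
    · simp only [List.map_cons, List.mem_cons, not_or] at hf
      simp [O₂, hf.1, hf.2.1, hout f (by simpa using hf.2)]
    · rintro u (_ | ⟨_, hu⟩)
      · simp [O₂]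
      · have hut : u.1 ≠ t.1 := fun h =>
          (List.nodup_cons.1 hnd.2).1 (h ▸ List.mem_map_of_mem hu)
        have hus : u.1 ≠ s.1 := fun h => hnd.1 (h ▸ List.mem_map_of_mem (List.mem_cons_of_mem _ hu))
        simp [O₂, hut, hus, hl u hu]

end Steps

section Existence

variable [LinearOrder G.E] {A : G.E → Bool}

lemma exists_min_step_of_not_minimalSteps {l : List (G.E × Bool)} (hl : l ≠ [])
    (h : ¬ G.MinimalSteps A l) : ∃ s ∈ l, (∀ t ∈ l, s.1 ≤ t.1) ∧ s.2 = !A s.1 := by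
  obtain ⟨s, hs, hmin⟩ :=
    l.toFinset.exists_min_image Prod.fst ((List.toFinset_nonempty_iff _).2 hl)
  rw [List.mem_toFinset] at hs
  have hmin : ∀ t ∈ l, s.1 ≤ t.1 := fun t ht => hmin t (List.mem_toFinset.2 ht)
  refine ⟨s, hs, hmin, ?_⟩
  rw [Bool.eq_not]
  exact fun hA => h ⟨s, hs, hmin, hA⟩

def defect (A : G.E → Bool) (e : G.E) (o : Option Bool) : ℕ :=
  if o = some (A e) then 0 else if o = none then 1 else 2

def potential (A : G.E → Bool) (O : G.PartialOrientation) : Lex (G.E → ℕ) :=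
  toLex fun e => defect A e (O e)

lemma potential_lt {O O' : G.PartialOrientation} {e : G.E} (hbelow : ∀ f < e, O' f = O f)
    (he : defect A e (O' e) < defect A e (O e)) : potential A O' < potential A O :=
  ⟨e, fun f hf => by simp [potential, hbelow f hf], he⟩

lemma exists_cycleRev_potential_lt {O : G.PartialOrientation} {l : List (G.E × Bool)}
    (hl : G.IsDCycle O l) (hmin : ¬ G.MinimalSteps A l) :
    ∃ O', G.cycleRev O O' ∧ potential A O' < potential A O := by
  let O' : G.PartialOrientation := fun f => if f ∈ l.map Prod.fst then (O f).map not else O f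
  have hrev : ∀ s ∈ l, O' s.1 = some !s.2 := fun s hs => by
    simp only [O', if_pos (List.mem_map_of_mem hs), hl.2.1 s hs, Option.map_some]
  obtain ⟨s, hs, hle, hA⟩ := exists_min_step_of_not_minimalSteps hl.1 hmin
  refine ⟨O', ⟨l, hl, fun f hf => if_neg hf, hrev⟩, potential_lt (e := s.1) ?_ ?_⟩
  · intro f hf
    refine if_neg fun hfl => ?_
    obtain ⟨t, ht, rfl⟩ := List.mem_map.1 hfl
    exact absurd (hle t ht) (not_le.2 hf)
  · simp [defect, hrev s hs, hl.2.1 s hs, hA]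

lemma exists_pivots_potential_lt {O : G.PartialOrientation} {p : List (G.E × Bool)}
    (hp : G.IsHalfOpenPath O p) (hmin : ¬ G.MinimalSteps A p) :
    ∃ O', Relation.ReflTransGen G.pivot O O' ∧ potential A O' < potential A O := by
  obtain ⟨hlen, hchain, hnd, hO, hlast⟩ := hp
  obtain ⟨s, l, rfl⟩ := List.exists_cons_of_ne_nil (List.ne_nil_of_length_pos (l := p) (by omega))
  obtain ⟨O', hpivots, hout, hs, hl⟩ :=
    exists_pivots_cascade s l hchain hnd hO (hlast (List.cons_ne_nil _ _))
  have horient : ∀ t ∈ s :: l, O t.1 = some t.2 ∨ O t.1 = none := by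
    intro t ht
    rw [← List.dropLast_append_getLast (List.cons_ne_nil s l), List.mem_append,
      List.mem_singleton] at ht
    rcases ht with ht | rfl
    exacts [.inl (hO t ht), .inr (hlast _)]
  obtain ⟨t, ht, hle, hA⟩ := exists_min_step_of_not_minimalSteps (List.cons_ne_nil s l) hmin
  refine ⟨O', hpivots, potential_lt (e := t.1) (fun f hf => hout f fun hfp => ?_) ?_⟩
  · obtain ⟨u, hu, rfl⟩ := List.mem_map.1 hfp
    exact absurd (hle u hu) (not_le.2 hf)
  rcases ht with _ | ⟨_, ht⟩
  · have hOs : O s.1 = some s.2 := hO s (by cases l with | nil => simp at hlen | cons => simp)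
    simp [defect, hs, hOs, hA]
  · rcases horient t (List.mem_cons_of_mem _ ht) with h | h <;> simp [defect, hl t ht, h, hA]

lemma exists_reflTransGen_cyclePathMinimal (A : G.E → Bool) (O : G.PartialOrientation) :
    ∃ O', Relation.ReflTransGen (fun a b => G.cycleRev a b ∨ G.pivot a b) O O' ∧
      G.CyclePathMinimal A O' := by
  induction O using (InvImage.wf (potential A) wellFounded_lt).induction with
  | _ O ih =>
  by_cases hO : G.CyclePathMinimal A O
  · exact ⟨O, .refl, hO⟩
  obtain ⟨O₁, hstep, hlt⟩ : ∃ O₁, Relation.ReflTransGen (fun a b => G.cycleRev a b ∨ G.pivot a b)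
      O O₁ ∧ potential A O₁ < potential A O := by
    simp only [CyclePathMinimal, CycleMinimal, not_and_or, not_forall] at hO
    rcases hO with ⟨l, hl, hmin⟩ | ⟨p, hp, hmin⟩
    · obtain ⟨O₁, hrev, hlt⟩ := exists_cycleRev_potential_lt hl hmin
      exact ⟨O₁, .single (.inl hrev), hlt⟩
    · obtain ⟨O₁, hpivots, hlt⟩ := exists_pivots_potential_lt hp hmin
      exact ⟨O₁, Relation.ReflTransGen.mono (fun _ _ => Or.inr) _ _ hpivots, hlt⟩
  obtain ⟨O', hsteps, hO'⟩ := ih O₁ hlt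
  exact ⟨O', hstep.trans hsteps, hO'⟩

end Existence

section Exchange

def OrientsInto (O : G.PartialOrientation) (X : Set G.V) (f : G.E) : Prop :=
  ∃ b, O f = some b ∧ G.dhead f b ∈ X

lemma indeg_eq_card_filter (O : G.PartialOrientation) (v : G.V) :
    G.indeg O v = (Finset.univ.filter fun e => headOf O e = some v).card := by
  simp only [indeg, headOf_eq_some, Nat.card_eq_fintype_card, Fintype.card_subtype]

lemma card_filter_orientsInto (O : G.PartialOrientation) (X : Set G.V) :
    (Finset.univ.filter (OrientsInto O X)).card = ∑ v ∈ X.toFinset, G.indeg O v := by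
  have hfibers : Finset.univ.filter (OrientsInto O X) =
      X.toFinset.biUnion fun v => Finset.univ.filter fun e => headOf O e = some v := by
    ext e
    simp only [Finset.mem_filter, Finset.mem_univ, true_and, Finset.mem_biUnion,
      Set.mem_toFinset, headOf_eq_some, OrientsInto]
    constructor
    · rintro ⟨b, hb, hX⟩
      exact ⟨_, hX, b, hb, rfl⟩
    · rintro ⟨v, hv, b, hb, rfl⟩
      exact ⟨b, hb, hv⟩
  rw [hfibers, Finset.card_biUnion]
  · simp only [indeg_eq_card_filter]
  · intro v _ w _ hvw
    exact Finset.disjoint_filter.2 fun e _ hv hw => hvw (Option.some.inj (hv.symm.trans hw))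

lemma exists_orientsInto_of_indeg_eq {P Q : G.PartialOrientation}
    (h : ∀ v, G.indeg P v = G.indeg Q v) (X : Set G.V) {e : G.E} (hQ : OrientsInto Q X e)
    (hP : ¬ OrientsInto P X e) : ∃ f, OrientsInto P X f ∧ ¬ OrientsInto Q X f := by
  by_contra! hsub
  have hcard : (Finset.univ.filter (OrientsInto P X)).card =
      (Finset.univ.filter (OrientsInto Q X)).card := by
    simp only [card_filter_orientsInto, h]
  have heq := Finset.eq_of_subset_of_card_le (fun f => by simpa using hsub f) hcard.ge
  have hmem := Finset.ext_iff.1 heq e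
  simp only [Finset.mem_filter, Finset.mem_univ, true_and] at hmem
  exact hP (hmem.2 hQ)

end Exchange

section Uniqueness

variable [LinearOrder G.E] {A : G.E → Bool}

lemma MinimalSteps.snd_eq {l : List (G.E × Bool)} (h : G.MinimalSteps A l) {s : G.E × Bool}
    (hs : s ∈ l) (hlt : ∀ t ∈ l, t = s ∨ s.1 < t.1) : s.2 = A s.1 := by
  obtain ⟨t, ht, hle, hA⟩ := h
  rcases hlt t ht with rfl | hst
  · exact hA
  · exact absurd (hle s hs) (not_le.2 hst)

def orientAbove (O : G.PartialOrientation) (e₀ : G.E) : G.PartialOrientation :=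
  fun f => if e₀ < f then O f else none

lemma orientAbove_eq_some {O : G.PartialOrientation} {e₀ f : G.E} {b : Bool} :
    orientAbove O e₀ f = some b ↔ e₀ < f ∧ O f = some b := by
  unfold orientAbove
  split_ifs with h <;> simp [h]

variable {P : G.PartialOrientation} {e₀ : G.E} {b : Bool}

/-- A path back through larger edges would close a directed cycle whose least edge `e₀` is
traversed against `A`. -/
lemma not_dReach_orientAbove_dtail (hP : G.CyclePathMinimal A P) (hPe : P e₀ = some b)
    (hb : b ≠ A e₀) : ¬ G.dReach (orientAbove P e₀) (G.dhead e₀ b) (G.dtail e₀ b) := by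
  intro hreach
  obtain ⟨l, hw, hl, hnd⟩ := exists_walk_of_dReach hreach
  have habove : ∀ t ∈ l, e₀ < t.1 ∧ P t.1 = some t.2 := fun t ht =>
    orientAbove_eq_some.1 (hl t ht)
  have hcycle : G.IsDCycle P ((e₀, b) :: l) := by
    refine isDCycle_cons hPe hw (fun t ht => (habove t ht).2) (List.nodup_cons.2 ⟨?_, hnd⟩)
    intro he₀
    obtain ⟨t, ht, hte⟩ := List.mem_map.1 he₀
    exact (habove t ht).1.ne' hte
  refine hb ((hP.1 _ hcycle).snd_eq List.mem_cons_self ?_)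
  rintro t (_ | ⟨_, ht⟩)
  exacts [.inl rfl, .inr (habove t ht).1]

/-- An unoriented such edge would end a half-open path whose least edge `e₀` is traversed
against `A`. -/
lemma orientsInto_of_dReach_orientAbove (hP : G.CyclePathMinimal A P) (hPe : P e₀ = some b)
    (hb : b ≠ A e₀) {f : G.E} (hf : e₀ < f) {d : Bool}
    (hd : G.dReach (orientAbove P e₀) (G.dhead e₀ b) (G.dtail f d)) :
    OrientsInto P {x | G.dReach (orientAbove P e₀) (G.dhead e₀ b) x} f := by
  rcases hPf : P f with _ | c
  · exfalso
    obtain ⟨l, hw, hl, hnd⟩ := exists_walk_of_dReach hd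
    have habove : ∀ t ∈ l, e₀ < t.1 ∧ P t.1 = some t.2 := fun t ht =>
      orientAbove_eq_some.1 (hl t ht)
    have hpath : G.IsHalfOpenPath P ((e₀, b) :: l ++ [(f, d)]) := by
      refine isHalfOpenPath_append_singleton (.cons rfl (hw.append (.single (f, d))))
        (List.cons_ne_nil _ _) ?_ ?_ hPf
      · have he₀ : e₀ ∉ l.map Prod.fst := fun he₀ => by
          obtain ⟨t, ht, hte⟩ := List.mem_map.1 he₀
          exact (habove t ht).1.ne' hte
        have hfl : f ∉ l.map Prod.fst := fun hfl => by
          obtain ⟨t, ht, rfl⟩ := List.mem_map.1 hfl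
          simp [(habove t ht).2] at hPf
        have hnd' := (hnd.concat hfl).cons (a := e₀) (by simp [he₀, hf.ne])
        simpa using hnd'
      · rintro t (_ | ⟨_, ht⟩)
        exacts [hPe, (habove t ht).2]
    refine hb ((hP.2 _ hpath).snd_eq (s := (e₀, b)) (by simp) ?_)
    simp only [List.cons_append, List.mem_cons, List.mem_append, List.not_mem_nil, or_false]
    rintro t (rfl | ht | rfl)
    exacts [.inl rfl, .inr (habove t ht).1, .inr hf]
  · refine ⟨c, hPf, ?_⟩
    rcases Bool.eq_or_eq_not d c with rfl | rfl
    · exact hd.tail ⟨f, d, orientAbove_eq_some.2 ⟨hf, hPf⟩, rfl, rfl⟩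
    · simpa using hd

lemma false_of_isLeast_of_eq_some_ne {Q : G.PartialOrientation} (hP : G.CyclePathMinimal A P)
    (hindeg : ∀ v, G.indeg Q v = G.indeg P v) (he₀ : IsLeast {f | P f ≠ Q f} e₀)
    (hPe : P e₀ = some b) (hb : b ≠ A e₀) : False := by
  set X := {x | G.dReach (orientAbove P e₀) (G.dhead e₀ b) x}
  have hQX : ¬ OrientsInto Q X e₀ := by
    rintro ⟨c, hQe, hcX⟩
    obtain rfl : c = !b := by
      rcases Bool.eq_or_eq_not c b with rfl | h
      · exact absurd (hPe.trans hQe.symm) he₀.1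
      · exact h
    rw [dhead_not] at hcX
    exact not_dReach_orientAbove_dtail hP hPe hb hcX
  obtain ⟨f, hQf, hPf⟩ := exists_orientsInto_of_indeg_eq hindeg X ⟨b, hPe, .refl⟩ hQX
  have hne : P f ≠ Q f := fun h => hPf (by simpa only [OrientsInto, h] using hQf)
  have hlt : e₀ < f := lt_of_le_of_ne (he₀.2 hne) (by rintro rfl; exact hQX hQf)
  obtain ⟨c, -, hcX⟩ := hQf
  rw [← dtail_not] at hcX
  exact hPf (orientsInto_of_dReach_orientAbove hP hPe hb hlt hcX)

lemma false_of_isLeast_of_eq_none {Q : G.PartialOrientation} (hP : G.CyclePathMinimal A P)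
    (hindeg : ∀ v, G.indeg P v = G.indeg Q v) (he₀ : IsLeast {f | P f ≠ Q f} e₀)
    (hPe : P e₀ = none) (hQe : Q e₀ = some (A e₀)) : False := by
  obtain ⟨f, ⟨c, hPf, hfv⟩, hQf⟩ := exists_orientsInto_of_indeg_eq hindeg {G.dhead e₀ (A e₀)}
    ⟨_, hQe, rfl⟩ (by rintro ⟨_, h, _⟩; simp [hPe] at h)
  have hne : P f ≠ Q f := fun h => hQf ⟨c, h ▸ hPf, hfv⟩
  have hlt : e₀ < f := lt_of_le_of_ne (he₀.2 hne) (by rintro rfl; simp [hPe] at hPf)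
  have hpath : G.IsHalfOpenPath P ([(f, c)] ++ [(e₀, !A e₀)]) := by
    refine isHalfOpenPath_append_singleton (.cons rfl (.cons ?_ (.nil _))) (by simp)
      (by simp [hlt.ne']) (by simpa using hPf) hPe
    simpa using hfv.symm
  have hA := (hP.2 _ hpath).snd_eq (s := (e₀, !A e₀)) (by simp) (by simp [hlt])
  simp at hA

lemma eq_of_cyclePathMinimal_of_indeg_eq {Q : G.PartialOrientation}
    (hP : G.CyclePathMinimal A P) (hQ : G.CyclePathMinimal A Q)
    (h : ∀ v, G.indeg P v = G.indeg Q v) : P = Q := by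
  by_contra hne
  obtain ⟨e₀, he₀⟩ : ∃ e₀, IsLeast {f | P f ≠ Q f} e₀ := by
    obtain ⟨f, hf⟩ := Function.ne_iff.1 hne
    have hdiff : (Finset.univ.filter fun f => P f ≠ Q f).Nonempty :=
      Finset.filter_nonempty_iff.2 ⟨f, Finset.mem_univ _, hf⟩
    exact ⟨_, by simpa using Finset.isLeast_min' _ hdiff⟩
  have he₀' : IsLeast {f | Q f ≠ P f} e₀ := by simpa only [ne_comm] using he₀
  have h' : ∀ v, G.indeg Q v = G.indeg P v := fun v => (h v).symm
  rcases hp : P e₀ with _ | b <;> rcases hq : Q e₀ with _ | c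
  · exact he₀.1 (hp.trans hq.symm)
  · rcases eq_or_ne c (A e₀) with rfl | hc
    exacts [false_of_isLeast_of_eq_none hP h he₀ hp hq,
      false_of_isLeast_of_eq_some_ne hQ h he₀' hq hc]
  · rcases eq_or_ne b (A e₀) with rfl | hb
    exacts [false_of_isLeast_of_eq_none hQ h' he₀' hq hp,
      false_of_isLeast_of_eq_some_ne hP h' he₀ hp hb]
  · rcases eq_or_ne b (A e₀) with rfl | hb
    · exact false_of_isLeast_of_eq_some_ne hQ h he₀' hq fun hc => he₀.1 (by rw [hp, hq, hc])
    · exact false_of_isLeast_of_eq_some_ne hP h' he₀ hp hb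

end Uniqueness

end Multigraph

theorem stmt15_general (G : Multigraph) [LinearOrder G.E] (A : G.E → Bool) :
    (∀ O : G.PartialOrientation,
      ∃! O', Relation.ReflTransGen (fun a b => G.cycleRev a b ∨ G.pivot a b) O O' ∧
        G.CyclePathMinimal A O') ∧
    (∀ O O' : G.PartialOrientation, G.CyclePathMinimal A O → G.CyclePathMinimal A O' →
      (∀ v, G.indeg O v = G.indeg O' v) → O = O') := by
  refine ⟨fun O => ?_, fun O O' hO hO' h => Multigraph.eq_of_cyclePathMinimal_of_indeg_eq hO hO' h⟩
  obtain ⟨O', hsteps, hO'⟩ := Multigraph.exists_reflTransGen_cyclePathMinimal A O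
  refine ⟨O', ⟨hsteps, hO'⟩, fun O'' ⟨hsteps', hO''⟩ => ?_⟩
  refine Multigraph.eq_of_cyclePathMinimal_of_indeg_eq hO'' hO' fun v => ?_
  rw [Multigraph.indeg_eq_of_reflTransGen hsteps', Multigraph.indeg_eq_of_reflTransGen hsteps]

/-- every partial orientation is equivalent via cycle reversals and edge
pivots to a unique cycle-path minimal partial orientation; consequently cycle-path
minimal partial orientations are unique representatives of their indegree sequences. -/
theorem stmt15 (G : Multigraph) [LinearOrder G.E] (A : G.E → Bool) (hG : G.Connected) :
    (∀ O : G.PartialOrientation,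
      ∃! O', Relation.ReflTransGen (fun a b => G.cycleRev a b ∨ G.pivot a b) O O' ∧
        G.CyclePathMinimal A O') ∧
    (∀ O O' : G.PartialOrientation, G.CyclePathMinimal A O → G.CyclePathMinimal A O' →
      (∀ v, G.indeg O v = G.indeg O' v) → O = O') :=
  stmt15_general G A
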